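/- arXiv:1911.06962 — 3 statements merged into one kernel-verified Lean document; each statement's English description precedes it below -/
import Mathlib

section
/- Let G be a multi-relational graph and fix a relation sequence r₁,…,r_k. Define nonnegative real node states by h_t⁰ = 1 if t = u else 0, and h_t^l = ReLU(Σ_{r∈R} Σ_{s∈N_r(t)} α_r^l · h_s^{l-1}), where α_r^l > 0 if r = r_l and α_r^l = 0 otherwise. Then for every l ≤ k and every vertex t: h_t^l > 0 if and only if there exist vertices z₀ = u, z₁, …, z_l = t such that (z_{i-1}, r_i, z_i) is an edge of G for all 1 ≤ i ≤ l. -/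
/-- Lemma 2 of the GraIL paper. With relation-selective nonnegative attention weights
(`α_r^l > 0` iff `r = r_l`) and source-indicator initialization at `u`, after `l ≤ k`
rounds of message passing `h_t^l > 0` iff `t` is reachable from `u` by a relational
walk with label sequence `(r₁, …, r_l)`. -/
theorem stmt_5 {V R : Type*} [Fintype V] [Fintype R] [DecidableEq V]
    (E : V → R → V → Prop) [∀ s r t, Decidable (E s r t)]
    (u : V) (k : ℕ) (rel : ℕ → R)
    (α : ℕ → R → ℝ) (hα : ∀ l r, 0 ≤ α l r)
    (hsel : ∀ l r, 0 < α l r ↔ r = rel l)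
    (h : ℕ → V → ℝ)
    (h0 : ∀ t, h 0 t = if t = u then 1 else 0)
    (hupd : ∀ l t, h (l + 1) t =
      max 0 (∑ r : R, ∑ s ∈ Finset.univ.filter (fun s => E s r t), α (l + 1) r * h l s)) :
    ∀ l ≤ k, ∀ t : V,
      (0 < h l t ↔
        ∃ z : ℕ → V, z 0 = u ∧ z l = t ∧
          ∀ i, 1 ≤ i → i ≤ l → E (z (i - 1)) (rel i) (z i)) := by
  have hnn : ∀ l t, 0 ≤ h l t := by
    intro l t
    cases l with
    | zero => rw [h0]; split <;> norm_num
    | succ n => rw [hupd]; exact le_max_left _ _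
  intro l _
  induction l with
  | zero =>
    intro t
    rw [h0]
    constructor
    · intro ht
      refine ⟨fun _ => u, rfl, ?_, fun i h1 h0 => by omega⟩
      by_contra hne
      rw [if_neg (fun h => hne h.symm)] at ht
      exact lt_irrefl 0 ht
    · rintro ⟨z, hz0, hzl, _⟩
      rw [← hzl, hz0, if_pos rfl]; norm_num
  | succ n ih =>
    intro t
    rw [hupd]
    have hiff : 0 < max 0 (∑ r : R, ∑ s ∈ Finset.univ.filter (fun s => E s r t),
        α (n + 1) r * h n s) ↔
        0 < (∑ r : R, ∑ s ∈ Finset.univ.filter (fun s => E s r t), α (n + 1) r * h n s) := by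
      constructor
      · intro hp
        rcases lt_max_iff.mp hp with h1 | h1
        · exact absurd h1 (lt_irrefl 0)
        · exact h1
      · intro hp; exact lt_max_of_lt_right hp
    rw [hiff]
    constructor
    · intro hp
      obtain ⟨r, hr, hpos⟩ := Finset.exists_lt_of_sum_lt (by simpa using hp :
        (∑ r : R, (0:ℝ)) < ∑ r : R, ∑ s ∈ Finset.univ.filter (fun s => E s r t),
          α (n + 1) r * h n s)
      obtain ⟨s, hs, hspos⟩ := Finset.exists_lt_of_sum_lt (by simpa using hpos :
        (∑ s ∈ Finset.univ.filter (fun s => E s r t), (0:ℝ)) <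
          ∑ s ∈ Finset.univ.filter (fun s => E s r t), α (n + 1) r * h n s)
      simp only [Finset.mem_filter, Finset.mem_univ, true_and] at hs
      have hαpos : 0 < α (n + 1) r := by
        rcases (hα (n+1) r).lt_or_eq with h1 | h1
        · exact h1
        · rw [← h1] at hspos; simp at hspos
      have hrr : r = rel (n + 1) := (hsel _ _).mp hαpos
      have hhs : 0 < h n s := by
        by_contra hc
        push_neg at hc
        have : h n s = 0 := le_antisymm hc (hnn n s)
        rw [this] at hspos; simp at hspos
      obtain ⟨z, hz0, hzn, hze⟩ := (ih (by omega) s).mp hhs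
      refine ⟨fun i => if i ≤ n then z i else t, by simp [hz0], by simp, ?_⟩
      intro i h1 h2
      by_cases hi : i ≤ n
      · have : i - 1 ≤ n := by omega
        simpa [hi, this] using hze i h1 hi
      · have hi1 : i = n + 1 := by omega
        subst hi1
        simp only [Nat.add_sub_cancel, le_refl, if_pos, if_neg (by omega : ¬ n + 1 ≤ n)]
        rw [hzn, ← hrr]
        exact hs
    · rintro ⟨z, hz0, hzl, hze⟩
      have hs : 0 < h n (z n) := (ih (by omega) (z n)).mpr
        ⟨z, hz0, rfl, fun i h1 h2 => hze i h1 (by omega)⟩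
      have hE : E (z n) (rel (n + 1)) t := by
        have := hze (n + 1) (by omega) le_rfl
        simpa [hzl] using this
      have hterm : 0 < ∑ s ∈ Finset.univ.filter (fun s => E s (rel (n+1)) t),
          α (n + 1) (rel (n+1)) * h n s := by
        apply Finset.sum_pos'
        · intro s _; exact mul_nonneg (hα _ _) (hnn _ _)
        · exact ⟨z n, by simp [hE], mul_pos ((hsel _ _).mpr rfl) hs⟩
      apply Finset.sum_pos'
      · intro r _
        exact Finset.sum_nonneg fun s _ => mul_nonneg (hα _ _) (hnn _ _)
      · exact ⟨rel (n+1), Finset.mem_univ _, hterm⟩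
end

section
/- Under the setup of the previous lemma (k rounds of message passing with per-layer relation-selective positive attention weights α_{r_l}^l and source-indicator initialization at u), defining score(u,v) = h_v^k, we have score(u,v) ≠ 0 if and only if there exists a directed path u = z₀ → z₁ → ⋯ → z_k = v whose i-th edge has relation label r_i. Hence a k-layer GNN of this form with 1-dimensional embeddings can decide satisfaction of any chain rule r_t(X,Y) ← r₁(X,Z₁) ∧ ⋯ ∧ r_k(Z_{k-1},Y) grounded at X = u, Y = v. -/
/-- Theorem 1 of the GraIL paper. With `k` rounds of message passing using per-layer
relation-selective positive attention weights and source-indicator initialization at `u`,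
the score `h_v^k` is nonzero iff there is a directed relational path `u = z₀ → ⋯ → z_k = v`
whose `i`-th edge has label `r_i`, i.e. iff the body of the chain rule
`r_t(X,Y) ← r₁(X,Z₁) ∧ ⋯ ∧ r_k(Z_{k-1},Y)` is satisfied with `X = u`, `Y = v`. -/
theorem stmt_6 {V R : Type*} [Fintype V] [Fintype R] [DecidableEq V]
    (E : V → R → V → Prop) [∀ s r t, Decidable (E s r t)]
    (u v : V) (k : ℕ) (rel : ℕ → R)
    (α : ℕ → R → ℝ) (hα : ∀ l r, 0 ≤ α l r)
    (hsel : ∀ l r, 0 < α l r ↔ r = rel l)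
    (h : ℕ → V → ℝ)
    (h0 : ∀ t, h 0 t = if t = u then 1 else 0)
    (hupd : ∀ l t, h (l + 1) t =
      max 0 (∑ r : R, ∑ s ∈ Finset.univ.filter (fun s => E s r t), α (l + 1) r * h l s))
    (score : ℝ) (hscore : score = h k v) :
    score ≠ 0 ↔
      ∃ z : ℕ → V, z 0 = u ∧ z k = v ∧
        ∀ i, 1 ≤ i → i ≤ k → E (z (i - 1)) (rel i) (z i) := by
  have hnn : ∀ l t, 0 ≤ h l t := by
    intro l t
    cases l with
    | zero => rw [h0]; split <;> norm_num
    | succ n => rw [hupd]; exact le_max_left 0 _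
  have key : ∀ l t, (0 < h l t ↔ ∃ z : ℕ → V, z 0 = u ∧ z l = t ∧
      ∀ i, 1 ≤ i → i ≤ l → E (z (i - 1)) (rel i) (z i)) := by
    intro l
    induction l with
    | zero =>
      intro t
      rw [h0]
      constructor
      · intro hp
        by_cases htu : t = u
        · exact ⟨fun _ => u, rfl, by simp [htu], fun i h1 h2 => absurd (le_trans h1 h2) (by norm_num)⟩
        · simp [htu] at hp
      · rintro ⟨z, hz0, hzl, -⟩
        have htu : t = u := hzl ▸ hz0
        simp [htu]
    | succ n ih =>
      intro t
      rw [hupd]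
      constructor
      · intro hp
        have hS : 0 < ∑ r : R, ∑ s ∈ Finset.univ.filter (fun s => E s r t),
            α (n + 1) r * h n s := by
          rcases lt_max_iff.mp hp with hc | hc
          · exact absurd hc (lt_irrefl 0)
          · exact hc
        obtain ⟨r, -, hrne⟩ := Finset.exists_ne_zero_of_sum_ne_zero hS.ne'
        obtain ⟨s, hsmem, hsne⟩ := Finset.exists_ne_zero_of_sum_ne_zero hrne
        have hEs : E s r t := (Finset.mem_filter.mp hsmem).2
        have hαne : α (n + 1) r ≠ 0 := fun hz => hsne (by rw [hz, zero_mul])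
        have hhne : h n s ≠ 0 := fun hz => hsne (by rw [hz, mul_zero])
        have hαpos : 0 < α (n + 1) r := (hα _ _).lt_of_ne (Ne.symm hαne)
        have hrrel : r = rel (n + 1) := (hsel _ _).mp hαpos
        have hhpos : 0 < h n s := (hnn _ _).lt_of_ne (Ne.symm hhne)
        obtain ⟨z, hz0, hzn, hze⟩ := (ih s).mp hhpos
        refine ⟨fun i => if i ≤ n then z i else t, by simp [hz0], by simp, ?_⟩
        intro i h1 h2
        rcases Nat.lt_or_ge i (n + 1) with hi | hi
        · have hin : i ≤ n := Nat.lt_succ_iff.mp hi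
          have : i - 1 ≤ n := le_trans (Nat.sub_le i 1) hin
          simpa [this, hin] using hze i h1 hin
        · have hieq : i = n + 1 := le_antisymm h2 hi
          subst hieq
          have h1n : n + 1 - 1 ≤ n := by simp
          simp only [Nat.add_sub_cancel]
          rw [if_pos le_rfl, if_neg (Nat.not_succ_le_self n), hzn]
          exact hrrel ▸ hEs
      · rintro ⟨z, hz0, hzl, hze⟩
        refine lt_max_iff.mpr (Or.inr ?_)
        set s := z n with hs
        have hhpos : 0 < h n s := by
          refine (ih s).mpr ⟨z, hz0, rfl, fun i h1 h2 => hze i h1 (le_trans h2 (Nat.le_succ n))⟩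
        have hEs : E s (rel (n + 1)) t := by
          have := hze (n + 1) (Nat.succ_le_succ (Nat.zero_le n)) le_rfl
          simpa [hzl] using this
        have hterm : 0 < α (n + 1) (rel (n + 1)) * h n s :=
          mul_pos ((hsel _ _).mpr rfl) hhpos
        have hinner : α (n + 1) (rel (n + 1)) * h n s ≤
            ∑ s' ∈ Finset.univ.filter (fun s' => E s' (rel (n + 1)) t),
              α (n + 1) (rel (n + 1)) * h n s' := by
          refine Finset.single_le_sum (f := fun s' => α (n + 1) (rel (n + 1)) * h n s') (fun s' _ => mul_nonneg (hα _ _) (hnn _ _)) ?_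
          exact Finset.mem_filter.mpr ⟨Finset.mem_univ s, hEs⟩
        have houter : ∑ s' ∈ Finset.univ.filter (fun s' => E s' (rel (n + 1)) t),
              α (n + 1) (rel (n + 1)) * h n s' ≤
            ∑ r : R, ∑ s' ∈ Finset.univ.filter (fun s' => E s' r t), α (n + 1) r * h n s' := by
          refine Finset.single_le_sum
            (f := fun r => ∑ s' ∈ Finset.univ.filter (fun s' => E s' r t), α (n + 1) r * h n s')
            (fun r _ => Finset.sum_nonneg fun s' _ => mul_nonneg (hα _ _) (hnn _ _))
            (Finset.mem_univ _)
        exact lt_of_lt_of_le hterm (le_trans hinner houter)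
  rw [hscore]
  rw [← key k v]
  exact ⟨fun hne => (hnn k v).lt_of_ne (Ne.symm hne), fun hp => hp.ne'⟩
end

section
/- Let R₁,…,R_m be chain rules of length k (possibly with different relation signatures) sharing the same head r_t(X,Y). Running m parallel instances of the 1-dimensional relation-selective GNN (one per rule, with α weights selecting the respective rule's relations, and indicator values in {0,1} via thresholding h>0 at each layer) and summing their outputs at v yields a score equal to β = |{i : the body of R_i is satisfiable with X = u, Y = v}|. In particular score(u, r_t, v) = 0 iff no rule body is satisfied. -/
/-- Corollary 1 of the GraIL paper. Given `m` chain rules of length `k` with the same head,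
running `m` parallel 1-dimensional relation-selective GNN instances (one per rule, with
indicator values in `{0,1}` via thresholding `h > 0` at each layer) and summing their outputs
at `v` yields the number `β` of rules whose body is satisfied with `X = u`, `Y = v`;
in particular the score is `0` iff no rule body is satisfied. -/
theorem stmt_8 {V R : Type*} [Fintype V] [Fintype R] [DecidableEq V]
    (E : V → R → V → Prop) [∀ s r t, Decidable (E s r t)]
    (u v : V) (k m : ℕ) (rels : Fin m → ℕ → R)
    (h : Fin m → ℕ → V → ℝ)
    (h0 : ∀ i t, h i 0 t = if t = u then 1 else 0)
    (hupd : ∀ i l t, h i (l + 1) t =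
      if 0 < ∑ s ∈ Finset.univ.filter (fun s => E s (rels i (l + 1)) t), h i l s
      then 1 else 0)
    (score : ℝ) (hscore : score = ∑ i : Fin m, h i k v) :
    score = (Set.ncard {i : Fin m |
        ∃ z : ℕ → V, z 0 = u ∧ z k = v ∧
          ∀ j, 1 ≤ j → j ≤ k → E (z (j - 1)) (rels i j) (z j)} : ℝ) ∧
    (score = 0 ↔ ¬ ∃ i : Fin m, ∃ z : ℕ → V, z 0 = u ∧ z k = v ∧
          ∀ j, 1 ≤ j → j ≤ k → E (z (j - 1)) (rels i j) (z j)) := by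
  classical
  have key : ∀ i l t, h i l t =
      if (∃ z : ℕ → V, z 0 = u ∧ z l = t ∧
          ∀ j, 1 ≤ j → j ≤ l → E (z (j - 1)) (rels i j) (z j)) then 1 else 0 := by
    intro i l
    induction l with
    | zero =>
      intro t
      rw [h0]
      congr 1
      simp only [eq_iff_iff]
      constructor
      · intro ht
        exact ⟨fun _ => u, rfl, ht.symm, fun j hj hj' => by omega⟩
      · rintro ⟨z, hz0, hzl, _⟩
        rw [← hzl, hz0]
    | succ l ih =>
      intro t
      rw [hupd]
      congr 1
      simp only [eq_iff_iff]
      have hnn : ∀ s ∈ Finset.univ.filter (fun s => E s (rels i (l + 1)) t),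
          (0 : ℝ) ≤ h i l s := by
        intro s _
        rw [ih]
        split <;> norm_num
      constructor
      · intro hpos
        obtain ⟨s, hs, hne⟩ := Finset.exists_ne_zero_of_sum_ne_zero (ne_of_gt hpos)
        rw [Finset.mem_filter] at hs
        rw [ih] at hne
        have hP : ∃ z : ℕ → V, z 0 = u ∧ z l = s ∧
            ∀ j, 1 ≤ j → j ≤ l → E (z (j - 1)) (rels i j) (z j) := by
          by_contra hc
          simp [hc] at hne
        obtain ⟨z, hz0, hzl, hzE⟩ := hP
        refine ⟨fun j => if j ≤ l then z j else t, by simp [hz0], by simp, ?_⟩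
        intro j hj1 hjl
        rcases Nat.lt_or_ge j (l + 1) with hlt | hge
        · have hjle : j ≤ l := by omega
          have hj1le : j - 1 ≤ l := by omega
          simp only [if_pos hjle, if_pos hj1le]
          exact hzE j hj1 hjle
        · have hj : j = l + 1 := by omega
          subst hj
          have : l + 1 - 1 = l := by omega
          rw [this]
          simp only [if_pos (le_refl l), if_neg (by omega : ¬ l + 1 ≤ l)]
          rw [hzl]
          exact hs.2
      · rintro ⟨z, hz0, hzl, hzE⟩
        have hmem : z l ∈ Finset.univ.filter (fun s => E s (rels i (l + 1)) t) := by
          rw [Finset.mem_filter]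
          refine ⟨Finset.mem_univ _, ?_⟩
          have := hzE (l + 1) (by omega) (le_refl _)
          simpa [hzl] using this
        have hval : h i l (z l) = 1 := by
          rw [ih, if_pos]
          exact ⟨z, hz0, rfl, fun j hj1 hj2 => hzE j hj1 (by omega)⟩
        have hle := Finset.single_le_sum hnn hmem
        rw [hval] at hle
        linarith
  set P : Fin m → Prop := fun i => ∃ z : ℕ → V, z 0 = u ∧ z k = v ∧
      ∀ j, 1 ≤ j → j ≤ k → E (z (j - 1)) (rels i j) (z j) with hP
  have hfin : {i : Fin m | P i}.Finite := Set.toFinite _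
  have hcard : score = ({i : Fin m | P i}.ncard : ℝ) := by
    rw [hscore]
    have : ∀ i : Fin m, h i k v = if P i then 1 else 0 := fun i => key i k v
    simp only [this]
    rw [Finset.sum_boole]
    congr 1
    rw [Set.ncard_eq_toFinset_card']
    congr 1
    ext i
    simp [P]
  refine ⟨hcard, ?_⟩
  rw [hcard]
  rw [Nat.cast_eq_zero, Set.ncard_eq_zero hfin]
  rw [Set.eq_empty_iff_forall_notMem]
  simp [P, not_exists]
end
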